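/- arXiv:2307.16652 — 3 statements merged into one kernel-verified Lean document; each statement's English description precedes it below -/
import Mathlib

section
/- Let x, y, z be three distinct points of S whose three pairwise distances d(x,y), d(x,z), d(y,z) are pairwise distinct. Then exactly two of the six values g_{xyz}, g_{xzy}, g_{yxz}, g_{yzx}, g_{zxy}, g_{zyx} are nonzero. -/
/-! `g a b c` is nonzero exactly when `{a, c}` is a shortest side of the triangle `a b c`
(the focus `U a b` always contains `b`, so the denominator never vanishes). When the three
sides have distinct lengths there is exactly one shortest side `{a, c}`, and it is the outer
pair of exactly two of the six orderings, `(a, b, c)` and `(c, b, a)`. -/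

theorem pald_g_ne_zero_iff {S : Type*} [Fintype S] (d : S → S → ℝ)
    (U : S → S → Finset S)
    (hU : ∀ a b, U a b = Finset.univ.filter (fun w => d a w ≤ d a b ∨ d b w ≤ d a b))
    (g : S → S → S → ℝ)
    (hg : ∀ a b c, g a b c = (if d a c ≤ d b c then (1 : ℝ) else 0)
      * (if d a c ≤ d a b then (1 : ℝ) else 0) / ((U a b).card : ℝ))
    (a b c : S) : g a b c ≠ 0 ↔ d a c ≤ d b c ∧ d a c ≤ d a b := by
  have hb : b ∈ U a b := by simp [hU]
  have hcard : ((U a b).card : ℝ) ≠ 0 := by exact_mod_cast (Finset.card_pos.mpr ⟨b, hb⟩).ne'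
  rw [hg]
  split_ifs <;> simp_all

theorem pald_g_exactly_two_nonzero_general {S : Type*} [Fintype S]
    (d : S → S → ℝ)
    (hsymm : ∀ a b, d a b = d b a)
    (U : S → S → Finset S)
    (hU : ∀ a b, U a b = Finset.univ.filter (fun w => d a w ≤ d a b ∨ d b w ≤ d a b))
    (g : S → S → S → ℝ)
    (hg : ∀ a b c, g a b c = (if d a c ≤ d b c then (1 : ℝ) else 0)
      * (if d a c ≤ d a b then (1 : ℝ) else 0) / ((U a b).card : ℝ))
    (x y z : S)
    (hd1 : d x y ≠ d x z) (hd2 : d x y ≠ d y z) (hd3 : d x z ≠ d y z) :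
    ([g x y z, g x z y, g y x z, g y z x, g z x y, g z y x].filter
      (fun v => decide (v ≠ 0))).length = 2 := by
  simp only [List.filter_cons, pald_g_ne_zero_iff d U hU g hg, hsymm z x, hsymm z y, hsymm y x,
    List.filter_nil]
  rcases hd1.lt_or_gt with h1 | h1 <;> rcases hd2.lt_or_gt with h2 | h2 <;>
    rcases hd3.lt_or_gt with h3 | h3 <;>
    simp [h1.le, h2.le, h3.le, h1.not_ge, h2.not_ge, h3.not_ge] <;> linarith

/-- If `x, y, z` are three distinct points whose three pairwise distances
are pairwise distinct, then exactly two of the six values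
`g_{xyz}, g_{xzy}, g_{yxz}, g_{yzx}, g_{zxy}, g_{zyx}` are nonzero. -/
theorem pald_g_exactly_two_nonzero {S : Type*} [Fintype S] [DecidableEq S]
    (d : S → S → ℝ)
    (hsymm : ∀ a b, d a b = d b a)
    (hzero : ∀ a, d a a = 0)
    (hpos : ∀ a b, a ≠ b → 0 < d a b)
    (U : S → S → Finset S)
    (hU : ∀ a b, U a b = Finset.univ.filter (fun w => d a w ≤ d a b ∨ d b w ≤ d a b))
    (g : S → S → S → ℝ)
    (hg : ∀ a b c, g a b c = (if d a c ≤ d b c then (1 : ℝ) else 0)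
      * (if d a c ≤ d a b then (1 : ℝ) else 0) / ((U a b).card : ℝ))
    (x y z : S) (hxy : x ≠ y) (hxz : x ≠ z) (hyz : y ≠ z)
    (hd1 : d x y ≠ d x z) (hd2 : d x y ≠ d y z) (hd3 : d x z ≠ d y z) :
    ([g x y z, g x z y, g y x z, g y z x, g z x y, g z y x].filter
      (fun v => decide (v ≠ 0))).length = 2 :=
  pald_g_exactly_two_nonzero_general d hsymm U hU g hg x y z hd1 hd2 hd3
end

section
/- Suppose the distances on S are tie-free. Then the number of ordered triplets (x,y,z) of pairwise distinct points of S with g_{xyz} ≠ 0 equals 2·C(n,3) = n(n−1)(n−2)/3; that is, exactly one third of the n(n−1)(n−2) ordered triplets of distinct points yield a nonzero value of g. -/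
/-!
For three distinct points the three pairwise distances are distinct, so every triangle has a
unique shortest side, and for distinct `x, y, z` we have `g_{xyz} ≠ 0` exactly when that side is
`{x, z}`. The rotation `(x, y, z) ↦ (y, z, x)` cycles through the three sides, so exactly one of
the three rotations of a triple of distinct points counts; since the rotation permutes the
triples, one third of the `n (n - 1) (n - 2)` ordered triples of distinct points count.
-/

open Finset

theorem Equiv.Perm.mul_card_filter_eq_of_card_filter_pow_apply {α : Type*} [Fintype α]
    (σ : Equiv.Perm α) (k : ℕ) (p q : α → Prop) [DecidablePred p] [DecidablePred q]
    (h : ∀ t, #{i ∈ range k | p ((σ ^ i) t)} = if q t then 1 else 0) :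
    k * #{t | p t} = #{t | q t} :=
  calc k * #{t | p t} = ∑ i ∈ range k, #{t | p ((σ ^ i) t)} := by
        simp only [card_filter, Equiv.sum_comp (σ ^ _) (fun t => if p t then 1 else 0),
          sum_const, card_range, smul_eq_mul]
    _ = ∑ t, #{i ∈ range k | p ((σ ^ i) t)} := by simp only [card_filter]; exact sum_comm
    _ = #{t | q t} := by simp only [h, card_filter]

def rotateTriple (α : Type*) : Equiv.Perm (α × α × α) where
  toFun t := (t.2.1, t.2.2, t.1)
  invFun t := (t.2.2, t.1, t.2.1)
  left_inv _ := rfl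
  right_inv _ := rfl

abbrev IsDistinctTriple {α : Type*} (t : α × α × α) : Prop :=
  t.1 ≠ t.2.1 ∧ t.1 ≠ t.2.2 ∧ t.2.1 ≠ t.2.2

def distinctTriplesEquivEmbedding (α : Type*) :
    {t : α × α × α // IsDistinctTriple t} ≃ (Fin 3 ↪ α) where
  toFun t := ⟨![t.1.1, t.1.2.1, t.1.2.2], by
    obtain ⟨⟨x, y, z⟩, hxy, hxz, hyz⟩ := t
    intro i j hij
    fin_cases i <;> fin_cases j <;> simp_all [eq_comm]⟩
  invFun f := ⟨(f 0, f 1, f 2),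
    f.injective.ne (by decide), f.injective.ne (by decide), f.injective.ne (by decide)⟩
  left_inv _ := rfl
  right_inv f := by ext i; fin_cases i <;> rfl

theorem card_filter_isDistinctTriple (α : Type*) [Fintype α] [DecidableEq α] :
    #{t : α × α × α | IsDistinctTriple t} = (Fintype.card α).descFactorial 3 := by
  rw [← Fintype.card_subtype, Fintype.card_congr (distinctTriplesEquivEmbedding α),
    Fintype.card_embedding_eq, Fintype.card_fin]

section Triangle

variable {S β : Type*}

def TieFree (d : S → S → β) : Prop :=
  ∀ a b a' b', a ≠ b → a' ≠ b' → d a b = d a' b' → (a = a' ∧ b = b') ∨ (a = b' ∧ b = a')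

theorem TieFree.ne {d : S → S → β} (hd : TieFree d) {x y z : S} (hxy : x ≠ y) (hxz : x ≠ z)
    (hyz : y ≠ z) : d x y ≠ d x z := fun h => by
  rcases hd x y x z hxy hxz h with ⟨-, h⟩ | ⟨h, -⟩
  exacts [hyz h, hxz h]

variable [LinearOrder β]

abbrev IsShortestOuterSide (d : S → S → β) (t : S × S × S) : Prop :=
  t.1 ≠ t.2.1 ∧ t.1 ≠ t.2.2 ∧ t.2.1 ≠ t.2.2 ∧ d t.1 t.2.2 ≤ d t.2.1 t.2.2 ∧ d t.1 t.2.2 ≤ d t.1 t.2.1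

variable [DecidableEq S] {d : S → S → β}

theorem card_filter_isShortestOuterSide_rotateTriple_pow (hsymm : ∀ a b, d a b = d b a)
    (htiefree : TieFree d) (t : S × S × S) :
    #{i ∈ range 3 | IsShortestOuterSide d ((rotateTriple S ^ i) t)}
      = if IsDistinctTriple t then 1 else 0 := by
  obtain ⟨x, y, z⟩ := t
  have sides_ne (hxy : x ≠ y) (hxz : x ≠ z) (hyz : y ≠ z) :
      d x y ≠ d x z ∧ d x y ≠ d y z ∧ d x z ≠ d y z := by
    refine ⟨htiefree.ne hxy hxz hyz, ?_, ?_⟩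
    · rw [hsymm x y]; exact htiefree.ne hxy.symm hyz hxz
    · rw [hsymm x z, hsymm y z]; exact htiefree.ne hxz.symm hyz.symm hxy
  rw [card_filter]
  simp only [sum_range_succ, pow_succ, rotateTriple, Equiv.Perm.mul_apply, pow_zero,
    Equiv.Perm.one_apply, range_zero, sum_empty, Equiv.coe_fn_mk, zero_add,
    IsShortestOuterSide, IsDistinctTriple, hsymm y x, hsymm z x, hsymm z y]
  grind

variable [Fintype S]

theorem three_mul_card_filter_isShortestOuterSide (hsymm : ∀ a b, d a b = d b a)
    (htiefree : TieFree d) :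
    3 * #{t | IsShortestOuterSide d t} = (Fintype.card S).descFactorial 3 := by
  rw [(rotateTriple S).mul_card_filter_eq_of_card_filter_pow_apply 3 _ _
    (card_filter_isShortestOuterSide_rotateTriple_pow hsymm htiefree),
    card_filter_isDistinctTriple]

end Triangle

theorem pald_g_nonzero_count_general {S : Type*} [Fintype S] [DecidableEq S]
    (d : S → S → ℝ)
    (hsymm : ∀ a b, d a b = d b a)
    (htiefree : ∀ a b a' b', a ≠ b → a' ≠ b' → d a b = d a' b' →
      (a = a' ∧ b = b') ∨ (a = b' ∧ b = a'))
    (n : ℕ) (hcard : Fintype.card S = n)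
    (U : S → S → Finset S)
    (hU : ∀ a b, U a b = Finset.univ.filter (fun w => d a w ≤ d a b ∨ d b w ≤ d a b))
    (g : S → S → S → ℝ)
    (hg : ∀ a b c, g a b c = (if d a c ≤ d b c then (1 : ℝ) else 0)
      * (if d a c ≤ d a b then (1 : ℝ) else 0) / ((U a b).card : ℝ)) :
    (Finset.univ.filter (fun t : S × S × S =>
        t.1 ≠ t.2.1 ∧ t.1 ≠ t.2.2 ∧ t.2.1 ≠ t.2.2 ∧ g t.1 t.2.1 t.2.2 ≠ 0)).card
      = 2 * n.choose 3 ∧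
    2 * n.choose 3 = n * (n - 1) * (n - 2) / 3 := by
  have hg_ne_zero (a b c : S) : g a b c ≠ 0 ↔ d a c ≤ d b c ∧ d a c ≤ d a b := by
    have hU_pos : 0 < #(U a b) := card_pos.2 ⟨b, by simp [hU]⟩
    simp [hg, hU_pos.ne', and_comm]
  have hdesc : n.descFactorial 3 = 6 * n.choose 3 := by
    rw [Nat.descFactorial_eq_factorial_mul_choose]; rfl
  have hthird := three_mul_card_filter_isShortestOuterSide hsymm htiefree
  rw [hcard, hdesc] at hthird
  constructor
  · simp only [hg_ne_zero]
    change #{t | IsShortestOuterSide d t} = _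
    omega
  · refine (Nat.div_eq_of_eq_mul_left (by norm_num) ?_).symm
    calc n * (n - 1) * (n - 2) = n.descFactorial 3 := by
          simp only [Nat.descFactorial_succ, tsub_zero, Nat.descFactorial_zero, mul_one]; ring
      _ = 2 * n.choose 3 * 3 := by rw [hdesc]; ring

/-- If the distances on `S` are tie-free, then the number of ordered
triplets `(x,y,z)` of pairwise distinct points with `g_{xyz} ≠ 0` equals
`2·C(n,3) = n(n-1)(n-2)/3`. -/
theorem pald_g_nonzero_count {S : Type*} [Fintype S] [DecidableEq S]
    (d : S → S → ℝ)
    (hsymm : ∀ a b, d a b = d b a)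
    (hzero : ∀ a, d a a = 0)
    (hpos : ∀ a b, a ≠ b → 0 < d a b)
    (htiefree : ∀ a b a' b', a ≠ b → a' ≠ b' → d a b = d a' b' →
      (a = a' ∧ b = b') ∨ (a = b' ∧ b = a'))
    (n : ℕ) (hcard : Fintype.card S = n)
    (U : S → S → Finset S)
    (hU : ∀ a b, U a b = Finset.univ.filter (fun w => d a w ≤ d a b ∨ d b w ≤ d a b))
    (g : S → S → S → ℝ)
    (hg : ∀ a b c, g a b c = (if d a c ≤ d b c then (1 : ℝ) else 0)
      * (if d a c ≤ d a b then (1 : ℝ) else 0) / ((U a b).card : ℝ)) :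
    (Finset.univ.filter (fun t : S × S × S =>
        t.1 ≠ t.2.1 ∧ t.1 ≠ t.2.2 ∧ t.2.1 ≠ t.2.2 ∧ g t.1 t.2.1 t.2.2 ≠ 0)).card
      = 2 * n.choose 3 ∧
    2 * n.choose 3 = n * (n - 1) * (n - 2) / 3 :=
  pald_g_nonzero_count_general d hsymm htiefree n hcard U hU g hg
end

section
/- Suppose the distances on S are tie-free. Then for every pair of distinct points x, z of S, Σ_{y ∈ S} g_{xyz} = Σ_{y ∈ S \ {x,z}} 1[d(x,z) < d(x,y) and d(x,z) < d(y,z)] / u_{xy}; that is, the cohesion sum over all y equals the sum over third points y of 1/u_{xy} restricted to triplets {x,y,z} in which (x,z) is the strictly closest pair. (This establishes the equivalence of the pairwise and triplet algorithms' cohesion updates.) -/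
/-!
For a third point `y`, tie-freeness makes `d x z` differ from both `d x y` and `d y z`, so the
two non-strict comparisons in `g x y z` are strict. For `y = x` or `y = z` one of them compares
the positive `d x z` with a zero self-distance, so these terms of the cohesion sum vanish.
-/

theorem ite_le_mul_ite_le_eq_ite_lt_and {α : Type*} [LinearOrder α] {a b c : α}
    (hab : a ≠ b) (hac : a ≠ c) :
    (if a ≤ b then (1 : ℝ) else 0) * (if a ≤ c then (1 : ℝ) else 0)
      = if a < c ∧ a < b then 1 else 0 := by
  simp only [hab.le_iff_lt, hac.le_iff_lt]
  by_cases hb : a < b <;> by_cases hc : a < c <;> simp [hb, hc]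

theorem dist_ne_of_tieFree {S : Type*} {d : S → S → ℝ}
    (htiefree : ∀ a b a' b', a ≠ b → a' ≠ b' → d a b = d a' b' →
      (a = a' ∧ b = b') ∨ (a = b' ∧ b = a'))
    {a b a' b' : S} (hab : a ≠ b) (ha'b' : a' ≠ b')
    (hdiff : ¬((a = a' ∧ b = b') ∨ (a = b' ∧ b = a'))) :
    d a b ≠ d a' b' :=
  fun h => hdiff (htiefree a b a' b' hab ha'b' h)

theorem pald_pairwise_triplet_equiv_general {S : Type*} [Fintype S] [DecidableEq S]
    (d : S → S → ℝ)
    (hzero : ∀ a, d a a = 0)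
    (hpos : ∀ a b, a ≠ b → 0 < d a b)
    (htiefree : ∀ a b a' b', a ≠ b → a' ≠ b' → d a b = d a' b' →
      (a = a' ∧ b = b') ∨ (a = b' ∧ b = a'))
    (U : S → S → Finset S)
    (g : S → S → S → ℝ)
    (hg : ∀ a b c, g a b c = (if d a c ≤ d b c then (1 : ℝ) else 0)
      * (if d a c ≤ d a b then (1 : ℝ) else 0) / ((U a b).card : ℝ))
    (x z : S) (hxz : x ≠ z) :
    ∑ y : S, g x y z
      = ∑ y ∈ Finset.univ.filter (fun y : S => y ≠ x ∧ y ≠ z),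
          (if d x z < d x y ∧ d x z < d y z then (1 : ℝ) else 0) / ((U x y).card : ℝ) := by
  rw [Finset.sum_filter]
  refine Finset.sum_congr rfl fun y _ => ?_
  rw [hg]
  by_cases hy : y ≠ x ∧ y ≠ z
  · rw [if_pos hy]
    obtain ⟨hyx, hyz⟩ := hy
    have hzy : d x z ≠ d y z := dist_ne_of_tieFree htiefree hxz hyz (by tauto)
    have hxy : d x z ≠ d x y := dist_ne_of_tieFree htiefree hxz (Ne.symm hyx) (by tauto)
    rw [ite_le_mul_ite_le_eq_ite_lt_and hzy hxy]
  · have hdxz := hpos x z hxz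
    obtain rfl | rfl : y = x ∨ y = z := by tauto
    all_goals simp [hzero, hdxz.not_ge]

/-- If the distances on `S` are tie-free, then for every pair of distinct
points `x, z`, `Σ_{y ∈ S} g_{xyz} = Σ_{y ∈ S \ {x,z}} 1[d(x,z) < d(x,y) ∧ d(x,z) < d(y,z)] / u_{xy}`,
i.e. the pairwise and triplet cohesion updates agree. -/
theorem pald_pairwise_triplet_equiv {S : Type*} [Fintype S] [DecidableEq S]
    (d : S → S → ℝ)
    (hsymm : ∀ a b, d a b = d b a)
    (hzero : ∀ a, d a a = 0)
    (hpos : ∀ a b, a ≠ b → 0 < d a b)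
    (htiefree : ∀ a b a' b', a ≠ b → a' ≠ b' → d a b = d a' b' →
      (a = a' ∧ b = b') ∨ (a = b' ∧ b = a'))
    (U : S → S → Finset S)
    (hU : ∀ a b, U a b = Finset.univ.filter (fun w => d a w ≤ d a b ∨ d b w ≤ d a b))
    (g : S → S → S → ℝ)
    (hg : ∀ a b c, g a b c = (if d a c ≤ d b c then (1 : ℝ) else 0)
      * (if d a c ≤ d a b then (1 : ℝ) else 0) / ((U a b).card : ℝ))
    (x z : S) (hxz : x ≠ z) :
    ∑ y : S, g x y z
      = ∑ y ∈ Finset.univ.filter (fun y : S => y ≠ x ∧ y ≠ z),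
          (if d x z < d x y ∧ d x z < d y z then (1 : ℝ) else 0) / ((U x y).card : ℝ) :=
  pald_pairwise_triplet_equiv_general d hzero hpos htiefree U g hg x z hxz
end
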